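/- arXiv:2007.07406 — 2 statements merged into one kernel-verified Lean document; each statement's English description precedes it below -/
import Mathlib

section
/- Let m₀ := sInf { M(v) : v Schwartz, v ≠ 0, V(v) = 0 }. If u : ℝ³ → ℂ is a Schwartz function with V(u) < 0, then M(u) > m₀. -/
open MeasureTheory

noncomputable section

abbrev E3 := EuclideanSpace ℝ (Fin 3)

/-- The mass. -/
def M (u : SchwartzMap E3 ℂ) : ℝ := ∫ x : E3, ‖u x‖ ^ 2

/-- The virial. -/
def V (u : SchwartzMap E3 ℂ) : ℝ :=
  ∫ x : E3, (‖fderiv ℝ u x‖ ^ 2 + ‖u x‖ ^ 6 - (3 / 4) * ‖u x‖ ^ 4)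

/-- The minimal mass of a nonzero zero-virial state. -/
def m₀ : ℝ := sInf {m : ℝ | ∃ v : SchwartzMap E3 ℂ, v ≠ 0 ∧ V v = 0 ∧ m = M v}

/-! Since `V(0) = 0`, `u ≠ 0`; vanishing at infinity, `u` is then not constant, so
`A = ∫ |∇u|² > 0`. Along the amplitude scaling the virial is `V(c • u) = c² g(c)` with
`g(c) = A + c⁴ ∫ |u|⁶ − (3/4) c² ∫ |u|⁴`, and `g(0) = A > 0 > V(u) = g(1)`. A zero `c ∈ (0, 1)`
of `g` gives the zero-virial state `c • u` of mass `c² M(u) < M(u)`. -/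

open Filter Topology Set
open scoped SchwartzMap

namespace SchwartzMap

variable {E F : Type*} [NormedAddCommGroup E] [NormedSpace ℝ E] [NormedAddCommGroup F]
  [NormedSpace ℝ F]

theorem eq_zero_of_fderiv_eq_zero [ProperSpace E] [Nontrivial E] {f : 𝓢(E, F)}
    (h : ∀ x, fderiv ℝ f x = 0) : f = 0 := by
  have hconst : ∀ x, f x = f 0 := fun x ↦ is_const_of_fderiv_eq_zero f.differentiable h x 0
  have hlim : Tendsto (fun _ : E ↦ f 0) (cocompact E) (𝓝 0) := by
    simpa only [← funext hconst] using f.tendsto_cocompact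
  ext x
  rw [hconst x, tendsto_const_nhds_iff.mp hlim]
  rfl

variable [FiniteDimensional ℝ E] [MeasurableSpace E] [BorelSpace E] (μ : Measure E)
  [μ.HasTemperateGrowth]

theorem integrable_norm_pow (f : 𝓢(E, F)) {n : ℕ} (hn : n ≠ 0) :
    Integrable (fun x ↦ ‖f x‖ ^ n) μ :=
  (f.memLp n μ).integrable_norm_pow hn

theorem integrable_norm_fderiv_pow (f : 𝓢(E, F)) {n : ℕ} (hn : n ≠ 0) :
    Integrable (fun x ↦ ‖fderiv ℝ f x‖ ^ n) μ :=
  (fderivCLM ℝ E F f).integrable_norm_pow μ hn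

variable [μ.IsOpenPosMeasure]

theorem integral_norm_pow_pos {f : 𝓢(E, F)} (hf : f ≠ 0) {n : ℕ} (hn : n ≠ 0) :
    0 < ∫ x, ‖f x‖ ^ n ∂μ := by
  obtain ⟨x, hx⟩ := DFunLike.ne_iff.mp hf
  exact integral_pos_of_integrable_nonneg_nonzero (x := x) (f.continuous.norm.pow n)
    (f.integrable_norm_pow μ hn) (fun _ ↦ by positivity) (by simpa [hn] using hx)

theorem integral_norm_fderiv_pow_pos [Nontrivial E] {f : 𝓢(E, F)} (hf : f ≠ 0) {n : ℕ}
    (hn : n ≠ 0) : 0 < ∫ x, ‖fderiv ℝ f x‖ ^ n ∂μ := by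
  have hf' : fderivCLM ℝ E F f ≠ 0 := fun h ↦
    hf (eq_zero_of_fderiv_eq_zero fun x ↦ by simpa using DFunLike.congr_fun h x)
  exact integral_norm_pow_pos μ hf' hn

end SchwartzMap

theorem M_smul (c : ℝ) (u : 𝓢(E3, ℂ)) : M (c • u) = c ^ 2 * M u := by
  simp only [M, smul_apply, norm_smul, mul_pow, Real.norm_eq_abs, sq_abs, integral_const_mul]

theorem V_smul (c : ℝ) (u : 𝓢(E3, ℂ)) :
    V (c • u) = c ^ 2 * (∫ x, ‖fderiv ℝ u x‖ ^ 2) + c ^ 6 * (∫ x, ‖u x‖ ^ 6)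
      - 3 / 4 * c ^ 4 * ∫ x, ‖u x‖ ^ 4 := by
  have hpt (x : E3) : ‖fderiv ℝ (c • u) x‖ ^ 2 + ‖(c • u) x‖ ^ 6 - 3 / 4 * ‖(c • u) x‖ ^ 4
      = c ^ 2 * ‖fderiv ℝ u x‖ ^ 2 + c ^ 6 * ‖u x‖ ^ 6 - 3 / 4 * c ^ 4 * ‖u x‖ ^ 4 := by
    rw [smul_apply, FunLike.coe_smul, fderiv_const_smul u.differentiableAt]
    simp only [norm_smul, mul_pow, Real.norm_eq_abs, Even.pow_abs (by decide : Even 2),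
      Even.pow_abs (by decide : Even 4), Even.pow_abs (by decide : Even 6), mul_assoc]
  have hA := (u.integrable_norm_fderiv_pow volume two_ne_zero).const_mul (c ^ 2)
  have hB := (u.integrable_norm_pow volume (n := 6) (by norm_num)).const_mul (c ^ 6)
  have hC := (u.integrable_norm_pow volume (n := 4) (by norm_num)).const_mul (3 / 4 * c ^ 4)
  rw [V, integral_congr_ae (.of_forall hpt), integral_sub (hA.fun_add hB) hC,
    integral_add hA hB, integral_const_mul, integral_const_mul, integral_const_mul]

theorem V_eq_add_sub (u : 𝓢(E3, ℂ)) :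
    V u = (∫ x, ‖fderiv ℝ u x‖ ^ 2) + (∫ x, ‖u x‖ ^ 6) - 3 / 4 * ∫ x, ‖u x‖ ^ 4 := by
  simpa using V_smul 1 u

theorem ne_zero_of_V_neg {u : 𝓢(E3, ℂ)} (hV : V u < 0) : u ≠ 0 := by
  rintro rfl
  simp [V] at hV

theorem exists_smul_V_eq_zero {u : 𝓢(E3, ℂ)} (hV : V u < 0) :
    ∃ c ∈ Ioo (0 : ℝ) 1, V (c • u) = 0 := by
  set A := ∫ x, ‖fderiv ℝ u x‖ ^ 2
  set B := ∫ x, ‖u x‖ ^ 6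
  set C := ∫ x, ‖u x‖ ^ 4
  let g (c : ℝ) : ℝ := A + c ^ 4 * B - 3 / 4 * c ^ 2 * C
  have hg0 : 0 < g 0 := by
    simpa [g] using
      SchwartzMap.integral_norm_fderiv_pow_pos volume (ne_zero_of_V_neg hV) two_ne_zero
  have hg1 : g 1 < 0 := by simpa [g, V_eq_add_sub] using hV
  obtain ⟨c, hc, hgc⟩ :=
    intermediate_value_Ioo' zero_le_one (by fun_prop : Continuous g).continuousOn ⟨hg1, hg0⟩
  refine ⟨c, hc, ?_⟩
  rw [V_smul]
  linear_combination c ^ 2 * hgc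

theorem m₀_le_M {v : 𝓢(E3, ℂ)} (hv : v ≠ 0) (hV : V v = 0) : m₀ ≤ M v :=
  csInf_le ⟨0, by rintro _ ⟨w, -, -, rfl⟩; exact integral_nonneg fun x ↦ by positivity⟩
    ⟨v, hv, hV, rfl⟩

theorem negative_virial_mass_above_threshold (u : SchwartzMap E3 ℂ)
    (hV : V u < 0) : M u > m₀ := by
  have hu := ne_zero_of_V_neg hV
  obtain ⟨c, ⟨hc0, hc1⟩, hVc⟩ := exists_smul_V_eq_zero hV
  have hM : 0 < M u := u.integral_norm_pow_pos volume hu two_ne_zero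
  calc m₀ ≤ M (c • u) := m₀_le_M (smul_ne_zero hc0.ne' hu) hVc
    _ = c ^ 2 * M u := M_smul c u
    _ < M u := mul_lt_of_lt_one_left hM (pow_lt_one₀ hc0.le hc1 two_ne_zero)
end
end

section
/- Let u : ℝ → 𝓢(ℝ³; ℂ) be a continuously differentiable curve in the Schwartz space (with its usual topology) such that for all t ∈ ℝ and x ∈ ℝ³, i·(∂ₜu)(t,x) + (Δ u(t))(x) = −|u(t,x)|²·u(t,x) + |u(t,x)|⁴·u(t,x). Then the mass M(u(t)) = ∫_{ℝ³} |u(t,x)|² dx is independent of t. -/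
open MeasureTheory Filter

noncomputable section

/-- The Laplacian: sum of second partial derivatives. -/
def lap (f : E3 → ℂ) (x : E3) : ℂ :=
  ∑ i : Fin 3,
    fderiv ℝ (fun y => fderiv ℝ f y (EuclideanSpace.single i 1)) x
      (EuclideanSpace.single i 1)

/-!
The mass is the squared norm of `u t` in `L²`, where `𝓢 ↪ L²` is continuous, so its time
derivative is `2 Re ⟪u, ∂ₜu⟫`. Pairing the equation with `u` gives
`i ⟪u, ∂ₜu⟫ = -⟪u, Δu⟫ + ∫ (|u|⁶ - |u|⁴)`, and `⟪u, Δu⟫ = ⟪Δu, u⟫` is real by integration by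
parts; hence `Re ⟪u, ∂ₜu⟫ = 0`.
-/

open Complex Laplacian LineDeriv
open scoped InnerProductSpace Topology SchwartzMap

theorem re_inner_eq_neg_im_inner_of_I_smul_add_eq {V : Type*} [NormedAddCommGroup V]
    [InnerProductSpace ℂ V] {v w d : V} {r : ℝ} (h : I • w + d = (r : ℂ) • v) :
    (⟪v, w⟫_ℂ).re = -(⟪v, d⟫_ℂ).im := by
  have h' := congrArg (fun z => (⟪v, z⟫_ℂ).im) h
  have hvv : (⟪v, v⟫_ℂ).im = 0 := inner_self_im (𝕜 := ℂ) v
  simp only [inner_add_right, inner_smul_right, add_im, mul_im, I_re, I_im, ofReal_im, hvv,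
    zero_mul, one_mul, zero_add, mul_zero] at h'
  linarith

namespace SchwartzMap

section Lp

variable {E F : Type*} [NormedAddCommGroup E] [NormedSpace ℝ E] [MeasurableSpace E]
  [OpensMeasurableSpace E] {μ : Measure E} [μ.HasTemperateGrowth] [NormedAddCommGroup F]
  [NormedSpace ℝ F] [SecondCountableTopologyEither E F]

theorem hasDerivAt_toLp_of_tendsto_slope {p : ENNReal} [Fact (1 ≤ p)] {u : ℝ → 𝓢(E, F)}
    {f : 𝓢(E, F)} {t : ℝ} (h : Tendsto (fun s : ℝ => s⁻¹ • (u (t + s) - u t)) (𝓝[≠] 0) (𝓝 f)) :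
    HasDerivAt (fun s => (u s).toLp p μ) (f.toLp p μ) t := by
  rw [hasDerivAt_iff_tendsto_slope_zero]
  have h' := ((toLpCLM ℝ F p μ).continuous.tendsto f).comp h
  simpa only [Function.comp_def, map_smul, map_sub, toLpCLM_apply] using h'

end Lp

section L2

variable {E V : Type*} [NormedAddCommGroup E] [NormedSpace ℝ E] [FiniteDimensional ℝ E]
  [MeasurableSpace E] [BorelSpace E] {μ : Measure E} [μ.HasTemperateGrowth]
  [NormedAddCommGroup V] [InnerProductSpace ℂ V]

theorem integrable_inner (f g : 𝓢(E, V)) : Integrable (fun x => ⟪f x, g x⟫_ℂ) μ :=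
  (pairing (isBoundedBilinearMap_inner (𝕜 := ℂ) (E := V)).toContinuousLinearMap f g).integrable

theorem norm_toL2_sq (f : 𝓢(E, V)) : ‖f.toLp 2 μ‖ ^ 2 = ∫ x, ‖f x‖ ^ 2 ∂μ := by
  have h := inner_toL2_toL2_eq f f μ
  simp_rw [inner_self_eq_norm_sq_to_K] at h
  exact_mod_cast h

theorem hasDerivAt_integral_norm_sq {u : ℝ → 𝓢(E, V)} {f : 𝓢(E, V)} {t : ℝ}
    (h : Tendsto (fun s : ℝ => s⁻¹ • (u (t + s) - u t)) (𝓝[≠] 0) (𝓝 f)) :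
    HasDerivAt (fun s => ∫ x, ‖u s x‖ ^ 2 ∂μ) (2 * (∫ x, ⟪u t x, f x⟫_ℂ ∂μ).re) t := by
  let _ : InnerProductSpace ℝ (Lp V 2 μ) := .rclikeToReal ℂ _
  simp_rw [← norm_toL2_sq]
  rw [← inner_toL2_toL2_eq (u t) f μ]
  exact (hasDerivAt_toLp_of_tendsto_slope h).norm_sq

end L2

section Laplacian

variable {E V : Type*} [NormedAddCommGroup E] [InnerProductSpace ℝ E] [FiniteDimensional ℝ E]
  [MeasurableSpace E] [BorelSpace E] {μ : Measure E} [μ.IsAddHaarMeasure]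
  [NormedAddCommGroup V] [InnerProductSpace ℂ V]

theorem im_integral_inner_laplacian_self (f : 𝓢(E, V)) : (∫ x, ⟪f x, Δ f x⟫_ℂ ∂μ).im = 0 := by
  have h := integral_bilinear_laplacian_right_eq_left (μ := μ) f f
    (isBoundedBilinearMap_inner (𝕜 := ℂ) (E := V)).toContinuousLinearMap
  simp only [IsBoundedBilinearMap.toContinuousLinearMap_apply] at h
  simp_rw [← inner_conj_symm (Δ f _), integral_conj] at h
  exact conj_eq_iff_im.mp h.symm

theorem re_integral_inner_eq_zero_of_schrodinger {f g : 𝓢(E, V)} (φ : E → ℝ)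
    (h : ∀ x, I • g x + Δ f x = (φ x : ℂ) • f x) : (∫ x, ⟪f x, g x⟫_ℂ ∂μ).re = 0 :=
  calc (∫ x, ⟪f x, g x⟫_ℂ ∂μ).re
      = ∫ x, (⟪f x, g x⟫_ℂ).re ∂μ := (integral_re (integrable_inner f g)).symm
    _ = -∫ x, (⟪f x, Δ f x⟫_ℂ).im ∂μ := by
      simp_rw [fun x => re_inner_eq_neg_im_inner_of_I_smul_add_eq (h x), integral_neg]
    _ = -(∫ x, ⟪f x, Δ f x⟫_ℂ ∂μ).im :=
      congrArg Neg.neg (integral_im (integrable_inner f (Δ f)))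
    _ = 0 := by rw [im_integral_inner_laplacian_self, neg_zero]

end Laplacian

end SchwartzMap

theorem lap_eq_laplacian (f : 𝓢(E3, ℂ)) (x : E3) : lap f x = Δ f x := by
  have hlineDeriv (m : E3) (g : 𝓢(E3, ℂ)) : ⇑(∂_{m} g : 𝓢(E3, ℂ)) = fun y => fderiv ℝ g y m :=
    funext (SchwartzMap.lineDerivOp_apply_eq_fderiv m g)
  simp [lap, SchwartzMap.laplacian_eq_sum (EuclideanSpace.basisFun (Fin 3) ℝ), hlineDeriv]

theorem mass_conservation_general
    (u : ℝ → SchwartzMap E3 ℂ) (u' : ℝ → SchwartzMap E3 ℂ)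
    (hderiv : ∀ t : ℝ,
      Tendsto (fun h : ℝ => h⁻¹ • (u (t + h) - u t)) (nhdsWithin 0 {0}ᶜ)
        (nhds (u' t)))
    (hPDE : ∀ t : ℝ, ∀ x : E3,
      Complex.I * u' t x + lap (u t) x =
        -(‖u t x‖ : ℂ) ^ 2 * u t x + (‖u t x‖ : ℂ) ^ 4 * u t x) :
    ∀ s t : ℝ, (∫ x : E3, ‖u s x‖ ^ 2) = ∫ x : E3, ‖u t x‖ ^ 2 := by
  have hmass (t : ℝ) : HasDerivAt (fun s => ∫ x : E3, ‖u s x‖ ^ 2) 0 t := by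
    have hre := SchwartzMap.re_integral_inner_eq_zero_of_schrodinger (μ := volume)
      (f := u t) (g := u' t) (fun x => ‖u t x‖ ^ 4 - ‖u t x‖ ^ 2) fun x => by
        rw [smul_eq_mul, smul_eq_mul, ← lap_eq_laplacian (u t) x, hPDE]
        push_cast
        ring
    simpa only [hre, mul_zero] using
      SchwartzMap.hasDerivAt_integral_norm_sq (μ := volume) (hderiv t)
  exact is_const_of_deriv_eq_zero (fun t => (hmass t).differentiableAt) (fun t => (hmass t).deriv)

theorem mass_conservation
    (u : ℝ → SchwartzMap E3 ℂ) (u' : ℝ → SchwartzMap E3 ℂ)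
    (hderiv : ∀ t : ℝ,
      Tendsto (fun h : ℝ => h⁻¹ • (u (t + h) - u t)) (nhdsWithin 0 {0}ᶜ)
        (nhds (u' t)))
    (hcont : Continuous u')
    (hPDE : ∀ t : ℝ, ∀ x : E3,
      Complex.I * u' t x + lap (u t) x =
        -(‖u t x‖ : ℂ) ^ 2 * u t x + (‖u t x‖ : ℂ) ^ 4 * u t x) :
    ∀ s t : ℝ, (∫ x : E3, ‖u s x‖ ^ 2) = ∫ x : E3, ‖u t x‖ ^ 2 :=
  mass_conservation_general u u' hderiv hPDE
end
end
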